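/- The derivative of g satisfies g'(y) ≤ 1 for every y ∈ ℝ, and g'(y) ≥ −(y/π + 1) for every y ≥ 0. -/

import Mathlib

open Real

noncomputable def tseq : ℕ → ℝ
  | 0 => 0
  | k + 1 => tseq k + (if k % 2 = 0 then Real.pi / ((k / 2 + 1 : ℕ) : ℝ) else Real.pi)

lemma tseq_odd (ℓ : ℕ) : tseq (2 * ℓ + 1) = tseq (2 * ℓ) + Real.pi / (ℓ + 1) := by
  show tseq (2 * ℓ) + _ = _
  simp [Nat.mul_mod_right, Nat.mul_div_cancel_left]

lemma tseq_even (ℓ : ℕ) : tseq (2 * ℓ + 2) = tseq (2 * ℓ + 1) + Real.pi := by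
  show tseq (2 * ℓ + 1) + _ = _
  have : (2 * ℓ + 1) % 2 = 1 := by omega
  simp [this]

lemma tseq_lt_succ (k : ℕ) : tseq k < tseq (k + 1) := by
  show tseq k < tseq k + _
  have := Real.pi_pos
  split <;> [skip; linarith]
  have : (0:ℝ) < ((k / 2 + 1 : ℕ) : ℝ) := by positivity
  nlinarith [div_pos Real.pi_pos this]

lemma tseq_mono : StrictMono tseq := strictMono_nat_of_lt_succ tseq_lt_succ

lemma tseq_ge (n : ℕ) : (n : ℝ) * Real.pi ≤ tseq (2 * n) := by
  induction n with
  | zero => simp [tseq]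
  | succ n ih =>
      have h1 : tseq (2 * (n + 1)) = tseq (2 * n) + Real.pi / (n + 1) + Real.pi := by
        have : 2 * (n + 1) = 2 * n + 1 + 1 := by ring
        rw [this]
        rw [show 2 * n + 1 + 1 = 2 * n + 2 from rfl, tseq_even, tseq_odd]
      have hp : (0:ℝ) < Real.pi / (n + 1) := by positivity
      push_cast
      rw [h1]
      nlinarith

lemma exists_k (y : ℝ) (hy : 0 ≤ y) : ∃ k, tseq k ≤ y ∧ y < tseq (k + 1) := by
  have hex : ∃ k, y < tseq (k + 1) := by
    set n := ⌈y / Real.pi⌉₊ + 1 with hn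
    have h1 : y / Real.pi < (n : ℝ) := by
      push_cast
      exact lt_of_le_of_lt (Nat.le_ceil _) (by linarith [Nat.lt_succ_self ⌈y / Real.pi⌉₊, (by exact_mod_cast Nat.lt_succ_self ⌈y / Real.pi⌉₊ : (⌈y / Real.pi⌉₊:ℝ) < ⌈y / Real.pi⌉₊ + 1), (by simp [hn] : (n:ℝ) = ⌈y / Real.pi⌉₊ + 1)])
    have h2 : y < (n : ℝ) * Real.pi := by
      rw [div_lt_iff₀ Real.pi_pos] at h1; linarith
    refine ⟨2 * n - 1, ?_⟩
    have : 2 * n - 1 + 1 = 2 * n := by omega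
    rw [this]
    exact lt_of_lt_of_le h2 (tseq_ge n)
  classical
  let k := Nat.find hex
  refine ⟨k, ?_, Nat.find_spec hex⟩
  rcases Nat.eq_zero_or_pos k with h0 | hpos
  · rw [h0]; show tseq 0 ≤ y; simp [tseq, hy]
  · obtain ⟨m, hm⟩ := Nat.exists_eq_add_of_lt hpos
    have hmk : m < k := by omega
    have := Nat.find_min hex hmk
    push_neg at this
    have : tseq (m + 1) ≤ y := this
    simpa [show k = m + 1 by omega] using this

lemma hasDerivAt_cos_affine (c a y : ℝ) :
    HasDerivAt (fun x => Real.cos (c * (x - a))) (-Real.sin (c * (y - a)) * c) y := by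
  have h1 : HasDerivAt (fun x : ℝ => c * (x - a)) c y := by
    simpa using ((hasDerivAt_id y).sub_const a).const_mul c
  exact (Real.hasDerivAt_cos _).comp y h1

lemma hasDerivAt_cos_shift (a y : ℝ) :
    HasDerivAt (fun x => Real.cos (x - a + Real.pi)) (-Real.sin (y - a + Real.pi)) y := by
  have h1 : HasDerivAt (fun x : ℝ => x - a + Real.pi) 1 y := by
    simpa using ((hasDerivAt_id y).sub_const a).add_const Real.pi
  have h2 := (Real.hasDerivAt_cos (y - a + Real.pi)).comp y h1
  rw [mul_one] at h2
  exact h2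

lemma deriv_eq_of_eqOn_Ioo {g f : ℝ → ℝ} {a b y d : ℝ} (hy : y ∈ Set.Ioo a b)
    (hgf : ∀ x ∈ Set.Ioo a b, g x = f x) (hf : HasDerivAt f d y) : deriv g y = d := by
  have hmem : Set.Ioo a b ∈ nhds y := Ioo_mem_nhds hy.1 hy.2
  have heq : g =ᶠ[nhds y] f := Filter.eventually_of_mem hmem hgf
  exact (hf.congr_of_eventuallyEq heq).deriv

lemma deriv_boundary {g f : ℝ → ℝ} {y b : ℝ} (hyb : y < b)
    (hgf : ∀ x ∈ Set.Ico y b, g x = f x) (hf : HasDerivAt f 0 y) : deriv g y = 0 := by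
  by_cases hd : DifferentiableAt ℝ g y
  · have hu : UniqueDiffWithinAt ℝ (Set.Ici y) y := uniqueDiffOn_Ici y y Set.self_mem_Ici
    have h1 : HasDerivWithinAt g (deriv g y) (Set.Ici y) y := hd.hasDerivAt.hasDerivWithinAt
    have hmem : Set.Ico y b ∈ nhdsWithin y (Set.Ici y) := by
      rw [← Set.Ici_inter_Iio]
      exact inter_mem_nhdsWithin _ (Iio_mem_nhds hyb)
    have heq : g =ᶠ[nhdsWithin y (Set.Ici y)] f := Filter.eventually_of_mem hmem hgf
    have h2 : HasDerivWithinAt g 0 (Set.Ici y) y :=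
      (hf.hasDerivWithinAt).congr_of_eventuallyEq heq (hgf y ⟨le_refl y, hyb⟩)
    have e1 := h1.derivWithin hu
    have e2 := h2.derivWithin hu
    rw [← e1, e2]
  · simp [deriv_zero_of_not_differentiableAt hd]

/-- For the function `g` of Example 2.6: `g'(y) ≤ 1` for all `y`, and
`g'(y) ≥ -(y/π + 1)` for all `y ≥ 0`. -/
theorem stmt_2 (g : ℝ → ℝ)
    (hneg : ∀ y : ℝ, y < 0 → g y = 1)
    (heven : ∀ (ℓ : ℕ), ∀ y ∈ Set.Ico (tseq (2 * ℓ)) (tseq (2 * ℓ + 1)),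
      g y = Real.cos (((ℓ : ℝ) + 1) * (y - tseq (2 * ℓ))))
    (hodd : ∀ (ℓ : ℕ), ∀ y ∈ Set.Ico (tseq (2 * ℓ + 1)) (tseq (2 * ℓ + 2)),
      g y = Real.cos (y - tseq (2 * ℓ + 1) + Real.pi)) :
    (∀ y : ℝ, deriv g y ≤ 1) ∧
    (∀ y : ℝ, 0 ≤ y → -(y / Real.pi + 1) ≤ deriv g y) := by
  have pi_pos := Real.pi_pos
  have key : ∀ y : ℝ, 0 ≤ y → deriv g y ≤ 1 ∧ -(y / Real.pi + 1) ≤ deriv g y := by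
    intro y hy
    obtain ⟨k, hk1, hk2⟩ := exists_k y hy
    have hy_div : 0 ≤ y / Real.pi := div_nonneg hy pi_pos.le
    rcases eq_or_lt_of_le hk1 with heq | hlt
    · -- boundary point: y = tseq k, deriv g y = 0
      subst heq
      have hd0 : deriv g (tseq k) = 0 := by
        rcases Nat.even_or_odd k with ⟨ℓ, hℓ⟩ | ⟨ℓ, hℓ⟩
        · have hk : k = 2 * ℓ := by omega
          subst hk
          apply deriv_boundary hk2 (fun x hx => heven ℓ x hx)
          have := hasDerivAt_cos_affine ((ℓ:ℝ)+1) (tseq (2*ℓ)) (tseq (2*ℓ))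
          simpa using this
        · have hk : k = 2 * ℓ + 1 := hℓ
          subst hk
          apply deriv_boundary hk2 (fun x hx => hodd ℓ x hx)
          have := hasDerivAt_cos_shift (tseq (2*ℓ+1)) (tseq (2*ℓ+1))
          simpa using this
      rw [hd0]
      constructor <;> linarith
    · -- interior
      rcases Nat.even_or_odd k with ⟨ℓ, hℓ⟩ | ⟨ℓ, hℓ⟩
      · have hk : k = 2 * ℓ := by omega
        subst hk
        set a := tseq (2 * ℓ) with ha
        set θ := ((ℓ:ℝ)+1) * (y - a) with hθ
        have hder : deriv g y = -Real.sin θ * ((ℓ:ℝ)+1) := by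
          apply deriv_eq_of_eqOn_Ioo ⟨hlt, hk2⟩
            (fun x hx => heven ℓ x ⟨le_of_lt hx.1, hx.2⟩)
          exact hasDerivAt_cos_affine _ _ y
        have hθ0 : 0 ≤ θ := by
          have : (0:ℝ) < (ℓ:ℝ)+1 := by positivity
          nlinarith
        have hθπ : θ ≤ Real.pi := by
          have h1 : y < a + Real.pi / ((ℓ:ℝ)+1) := by
            have := tseq_odd ℓ; rw [← ha] at this; rw [← this]; exact hk2
          have hp : (0:ℝ) < (ℓ:ℝ)+1 := by positivity
          rw [hθ]
          calc ((ℓ:ℝ)+1) * (y - a) ≤ ((ℓ:ℝ)+1) * (Real.pi / ((ℓ:ℝ)+1)) := by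
                apply mul_le_mul_of_nonneg_left (by linarith) hp.le
            _ = Real.pi := by field_simp
        have hsin : 0 ≤ Real.sin θ := Real.sin_nonneg_of_nonneg_of_le_pi hθ0 hθπ
        have hsin1 : Real.sin θ ≤ 1 := Real.sin_le_one θ
        have hℓy : (ℓ:ℝ) * Real.pi ≤ y := le_trans (tseq_ge ℓ) hlt.le
        have hℓdiv : (ℓ:ℝ) ≤ y / Real.pi := by
          rw [le_div_iff₀ pi_pos]; exact hℓy
        rw [hder]
        constructor
        · nlinarith
        · nlinarith
      · have hk : k = 2 * ℓ + 1 := hℓ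
        subst hk
        have hder : deriv g y = -Real.sin (y - tseq (2*ℓ+1) + Real.pi) := by
          apply deriv_eq_of_eqOn_Ioo ⟨hlt, hk2⟩
            (fun x hx => hodd ℓ x ⟨le_of_lt hx.1, hx.2⟩)
          exact hasDerivAt_cos_shift _ y
        rw [hder]
        have h1 := Real.sin_le_one (y - tseq (2*ℓ+1) + Real.pi)
        have h2 := Real.neg_one_le_sin (y - tseq (2*ℓ+1) + Real.pi)
        constructor <;> nlinarith
  constructor
  · intro y
    rcases lt_or_ge y 0 with hy | hy
    · have heq : g =ᶠ[nhds y] fun _ => (1:ℝ) :=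
        Filter.eventually_of_mem (Iio_mem_nhds hy) (fun x hx => hneg x hx)
      rw [heq.deriv_eq]
      simp
    · exact (key y hy).1
  · intro y hy
    exact (key y hy).2
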